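/- The coproduct Δ_h on k[Y^∞]_h is an algebra homomorphism: Δ_h(t ∗_h s) = Δ_h(t) ∗_h Δ_h(s), where the product on the tensor square is componentwise. -/

import Mathlib

/-- Genus-labelled graphs: `one` is the trivial graph `1 = |`, `vee` is grafting `∨`,
and `br` is the bridge operation `⌒` (which creates a loop). -/
inductive G where
  | one : G
  | vee : G → G → G
  | br : G → G → G
deriving DecidableEq

namespace G

/-- The order of a graph: the number of internal vertices of the underlying tree. -/
def order : G → ℕ
  | one => 0
  | vee a b => order a + order b + 1
  | br a b => order a + order b + 1

/-- The genus (loop number) of a graph. -/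
def genus : G → ℕ
  | one => 0
  | vee a b => genus a + genus b
  | br a b => genus a + genus b + 1

/-- The number of free (uncontracted) leaves of a graph. -/
def freeLeaves : G → ℕ
  | one => 1
  | vee a b => freeLeaves a + freeLeaves b
  | br a b => freeLeaves a + freeLeaves b - 2

/-- A graph is regular when every bridge genuinely contracts two free leaves;
irregular graphs are those in which some leaf is involved in more than one loop
contraction. -/
def Regular : G → Prop
  | one => True
  | vee a b => Regular a ∧ Regular b
  | br a b => Regular a ∧ Regular b ∧ 1 ≤ freeLeaves a ∧ 1 ≤ freeLeaves b

end G

/-- The quantized product `∗_h` on basis graphs, with values in the free `k`-module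
`k[Y^∞]_h`: `t ∗_h 1 = 1 ∗_h t = t` and
`(t₁∘t₂) ∗_h (s₁∘'s₂) = ((t₁∘t₂) ∗_h s₁) ∘' s₂ + t₁ ∘ (t₂ ∗_h (s₁∘'s₂))`
for `∘, ∘' ∈ {∨, ⌒}`. -/
noncomputable def G.hstar (k : Type*) [CommRing k] : G → G → (G →₀ k)
  | .one, t => Finsupp.single t 1
  | .vee a b, .one => Finsupp.single (.vee a b) 1
  | .br a b, .one => Finsupp.single (.br a b) 1
  | .vee a b, .vee c d =>
      Finsupp.mapDomain (fun u => G.vee u d) (G.hstar k (.vee a b) c)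
      + Finsupp.mapDomain (fun u => G.vee a u) (G.hstar k b (.vee c d))
  | .vee a b, .br c d =>
      Finsupp.mapDomain (fun u => G.br u d) (G.hstar k (.vee a b) c)
      + Finsupp.mapDomain (fun u => G.vee a u) (G.hstar k b (.br c d))
  | .br a b, .vee c d =>
      Finsupp.mapDomain (fun u => G.vee u d) (G.hstar k (.br a b) c)
      + Finsupp.mapDomain (fun u => G.br a u) (G.hstar k b (.vee c d))
  | .br a b, .br c d =>
      Finsupp.mapDomain (fun u => G.br u d) (G.hstar k (.br a b) c)
      + Finsupp.mapDomain (fun u => G.br a u) (G.hstar k b (.br c d))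
termination_by t s => t.order + s.order
decreasing_by all_goals simp [G.order] <;> omega

/-- The bilinear extension of `∗_h` to the free `k`-module `k[Y^∞]_h`. -/
noncomputable def G.hstarL (k : Type*) [CommRing k] (x y : G →₀ k) : G →₀ k :=
  x.sum fun t a => y.sum fun s b => (a * b) • G.hstar k t s

/-- The one-loop graph `O = | ⌒ |`. -/
def G.O : G := G.br G.one G.one

/-- The one-vertex tree `T = | ∨ |`. -/
def G.T : G := G.vee G.one G.one

/-- The quantized coproduct `Δ_h : k[Y^∞]_h → k[Y^∞]_h ⊗ k[Y^∞]_h`, where the tensor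
square of the free module on `G` is modelled as the free module on `G × G`:
`Δ_h(1) = 1⊗1` and `Δ_h(t₁∘t₂) = Σ (t₁' ∗_h t₂') ⊗ (t₁'' ∘ t₂'') + (t₁∘t₂) ⊗ 1`
for `∘ ∈ {∨, ⌒}`, in Sweedler notation. -/
noncomputable def G.cop (k : Type*) [CommRing k] : G → ((G × G) →₀ k)
  | .one => Finsupp.single (.one, .one) 1
  | .vee a b =>
      ((G.cop k a).sum fun p ca => (G.cop k b).sum fun q cb =>
        (ca * cb) • Finsupp.mapDomain (fun u => (u, G.vee p.2 q.2)) (G.hstar k p.1 q.1))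
      + Finsupp.single (G.vee a b, G.one) 1
  | .br a b =>
      ((G.cop k a).sum fun p ca => (G.cop k b).sum fun q cb =>
        (ca * cb) • Finsupp.mapDomain (fun u => (u, G.br p.2 q.2)) (G.hstar k p.1 q.1))
      + Finsupp.single (G.br a b, G.one) 1

/-- The tensor product of two elements of `k[Y^∞]_h`, in the free-module-on-`G × G`
model of the tensor square. -/
noncomputable def tensorMul (k : Type*) [CommRing k] (x y : G →₀ k) : (G × G) →₀ k :=
  x.sum fun u a => y.sum fun v b => Finsupp.single (u, v) (a * b)

/-- The componentwise product on the tensor square of `k[Y^∞]_h`. -/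
noncomputable def prodT (k : Type*) [CommRing k] (x y : (G × G) →₀ k) : (G × G) →₀ k :=
  x.sum fun p c => y.sum fun q d =>
    (c * d) • tensorMul k (G.hstar k p.1 q.1) (G.hstar k p.2 q.2)

/-!
Write `∗` for the bilinear extension of `∗_h` and `X ∘ Y` for bilinear grafting. Since a grafted
basis graph is never `1`, the defining recursion of `∗_h` holds for `(A ∘ B) ∗ (C ∘' D)` with
arbitrary elements `A, B, C, D`, and induction on the total order then makes `∗` associative.
On the tensor square, the componentwise product `·` and the grafting
`(x' ⊗ x'') ∘ (y' ⊗ y'') = (x' ∗ y') ⊗ (x'' ∘ y'')` satisfy the same recursion, by associativity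
of `∗` in the first factor. In these terms `Δ_h(X ∘ Y) = Δ_h X ∘ Δ_h Y + (X ∘ Y) ⊗ 1`, and
`Δ_h(t ∗_h s) = Δ_h t · Δ_h s` follows by induction on the total order of `t` and `s`: both sides
expand by the recursion, and the correction terms `(t ⊗ 1) · –` commute with grafting because
`1` is a unit for `∗`.
-/

open Finsupp

namespace Finsupp

variable {k α β M : Type*} [CommRing k] [AddCommMonoid M] [Module k M]

theorem linearCombination_linearCombination_apply (f : α → β → M) (x : α →₀ k)
    (y : β →₀ k) :
    linearCombination k (fun a => linearCombination k (f a)) x y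
      = x.sum fun a c => y.sum fun b d => (c * d) • f a b := by
  simp only [linearCombination_apply, LinearMap.finsupp_sum_apply, LinearMap.smul_apply,
    Finsupp.smul_sum, smul_smul]

variable (k α β) in
noncomputable def tensor : (α →₀ k) →ₗ[k] (β →₀ k) →ₗ[k] (α × β →₀ k) :=
  linearCombination k fun a => linearCombination k fun b => single (a, b) 1

@[simp]
theorem tensor_single (a : α) (b : β) (c d : k) :
    tensor k α β (single a c) (single b d) = single (a, b) (c * d) := by
  simp [tensor, smul_single]

theorem tensor_single_one_right (X : α →₀ k) (b : β) :
    tensor k α β X (single b 1) = mapDomain (·, b) X := by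
  induction X using Finsupp.induction_linear with
  | zero => simp
  | add X Y hX hY => simp only [map_add, LinearMap.add_apply, mapDomain_add, hX, hY]
  | single a c => simp

theorem single_eq_tensor (p : α × β) (c : k) :
    single p c = tensor k α β (single p.1 c) (single p.2 1) := by
  simp

noncomputable def tensorMap₂ (F : (α →₀ k) →ₗ[k] (α →₀ k) →ₗ[k] (α →₀ k))
    (F' : (β →₀ k) →ₗ[k] (β →₀ k) →ₗ[k] (β →₀ k)) :
    (α × β →₀ k) →ₗ[k] (α × β →₀ k) →ₗ[k] (α × β →₀ k) :=
  linearCombination k fun p => linearCombination k fun q =>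
    tensor k α β (F (single p.1 1) (single q.1 1)) (F' (single p.2 1) (single q.2 1))

variable (F : (α →₀ k) →ₗ[k] (α →₀ k) →ₗ[k] (α →₀ k))
  (F' : (β →₀ k) →ₗ[k] (β →₀ k) →ₗ[k] (β →₀ k))

@[simp]
theorem tensorMap₂_single (p q : α × β) (c d : k) :
    tensorMap₂ F F' (single p c) (single q d)
      = (c * d) •
        tensor k α β (F (single p.1 1) (single q.1 1)) (F' (single p.2 1) (single q.2 1)) := by
  simp [tensorMap₂, smul_smul]

theorem tensorMap₂_apply (A B : α × β →₀ k) :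
    tensorMap₂ F F' A B = A.sum fun p c => B.sum fun q d =>
      (c * d) • tensor k α β (F (single p.1 1) (single q.1 1)) (F' (single p.2 1) (single q.2 1)) :=
  linearCombination_linearCombination_apply _ A B

theorem tensorMap₂_tensor (U V : α →₀ k) (U' V' : β →₀ k) :
    tensorMap₂ F F' (tensor k α β U U') (tensor k α β V V') = tensor k α β (F U V) (F' U' V') := by
  induction U using Finsupp.induction_linear with
  | zero => simp
  | add U₁ U₂ h₁ h₂ => simp only [map_add, LinearMap.add_apply, h₁, h₂]
  | single a c =>
  induction U' using Finsupp.induction_linear with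
  | zero => simp
  | add U₁ U₂ h₁ h₂ => simp only [map_add, LinearMap.add_apply, h₁, h₂]
  | single a' c' =>
  induction V using Finsupp.induction_linear with
  | zero => simp
  | add V₁ V₂ h₁ h₂ => simp only [map_add, LinearMap.add_apply, h₁, h₂]
  | single b d =>
  induction V' using Finsupp.induction_linear with
  | zero => simp
  | add V₁ V₂ h₁ h₂ => simp only [map_add, h₁, h₂]
  | single b' d' =>
  rw [← smul_single_one a, ← smul_single_one a', ← smul_single_one b, ← smul_single_one b']
  simp only [map_smul, LinearMap.smul_apply, tensor_single, tensorMap₂_single, smul_smul]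
  ring_nf

end Finsupp

namespace G

variable {k : Type*} [CommRing k]

def node : Bool → G → G → G
  | true => vee
  | false => br

@[simp]
theorem order_node (o : Bool) (a b : G) : (node o a b).order = a.order + b.order + 1 := by
  cases o <;> rfl

theorem eq_one_or_eq_node (t : G) : t = one ∨ ∃ o a b, t = node o a b := by
  cases t with
  | one => exact .inl rfl
  | vee a b => exact .inr ⟨true, a, b, rfl⟩
  | br a b => exact .inr ⟨false, a, b, rfl⟩

section

variable (k)

noncomputable def star : (G →₀ k) →ₗ[k] (G →₀ k) →ₗ[k] (G →₀ k) :=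
  linearCombination k fun t => linearCombination k (hstar k t)

noncomputable def graft (o : Bool) : (G →₀ k) →ₗ[k] (G →₀ k) →ₗ[k] (G →₀ k) :=
  linearCombination k fun a => linearCombination k fun b => single (node o a b) 1

noncomputable abbrev starT : (G × G →₀ k) →ₗ[k] (G × G →₀ k) →ₗ[k] (G × G →₀ k) :=
  tensorMap₂ (star k) (star k)

noncomputable abbrev graftT (o : Bool) :
    (G × G →₀ k) →ₗ[k] (G × G →₀ k) →ₗ[k] (G × G →₀ k) :=
  tensorMap₂ (star k) (graft k o)

noncomputable def copL : (G →₀ k) →ₗ[k] (G × G →₀ k) :=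
  linearCombination k (cop k)

end

@[simp]
theorem star_single (t s : G) (c d : k) :
    star k (single t c) (single s d) = (c * d) • hstar k t s := by
  simp [star, smul_smul]

@[simp]
theorem graft_single (o : Bool) (a b : G) (c d : k) :
    graft k o (single a c) (single b d) = single (node o a b) (c * d) := by
  simp [graft, smul_single]

@[simp]
theorem copL_single (t : G) (c : k) : copL k (single t c) = c • cop k t := by
  simp [copL]

@[simp]
theorem hstar_one_left (t : G) : hstar k one t = single t 1 := by
  rw [hstar]

@[simp]
theorem hstar_one_right (t : G) : hstar k t one = single t 1 := by
  cases t <;> rw [hstar]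

@[simp]
theorem cop_one : cop k one = single (one, one) 1 := by
  rw [cop]

theorem star_one_left (X : G →₀ k) : star k (single one 1) X = X := by
  induction X using Finsupp.induction_linear with
  | zero => simp
  | add X Y hX hY => simp only [map_add, hX, hY]
  | single s c => simp

theorem star_one_right (X : G →₀ k) : star k X (single one 1) = X := by
  induction X using Finsupp.induction_linear with
  | zero => simp
  | add X Y hX hY => simp only [map_add, LinearMap.add_apply, hX, hY]
  | single s c => simp

theorem graft_single_one_left (o : Bool) (a : G) (X : G →₀ k) :
    graft k o (single a 1) X = mapDomain (node o a) X := by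
  induction X using Finsupp.induction_linear with
  | zero => simp
  | add X Y hX hY => simp only [map_add, mapDomain_add, hX, hY]
  | single b c => simp

theorem graft_single_one_right (o : Bool) (b : G) (X : G →₀ k) :
    graft k o X (single b 1) = mapDomain (node o · b) X := by
  induction X using Finsupp.induction_linear with
  | zero => simp
  | add X Y hX hY => simp only [map_add, LinearMap.add_apply, mapDomain_add, hX, hY]
  | single a c => simp

theorem hstar_node_node (o o' : Bool) (a b c d : G) :
    hstar k (node o a b) (node o' c d)
      = graft k o' (hstar k (node o a b) c) (single d 1)
        + graft k o (single a 1) (hstar k b (node o' c d)) := by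
  rw [graft_single_one_left, graft_single_one_right]
  cases o <;> cases o' <;> simp only [node] <;> rw [hstar]

theorem single_node (o : Bool) (a b : G) :
    single (node o a b) (1 : k) = graft k o (single a 1) (single b 1) := by
  simp

theorem star_graft_graft (o o' : Bool) (A B C D : G →₀ k) :
    star k (graft k o A B) (graft k o' C D)
      = graft k o' (star k (graft k o A B) C) D + graft k o A (star k B (graft k o' C D)) := by
  induction A using Finsupp.induction_linear with
  | zero => simp
  | add A₁ A₂ h₁ h₂ => simp only [map_add, LinearMap.add_apply, h₁, h₂]; abel
  | single a ca =>
  induction B using Finsupp.induction_linear with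
  | zero => simp
  | add B₁ B₂ h₁ h₂ => simp only [map_add, LinearMap.add_apply, h₁, h₂]; abel
  | single b cb =>
  induction C using Finsupp.induction_linear with
  | zero => simp
  | add C₁ C₂ h₁ h₂ => simp only [map_add, LinearMap.add_apply, h₁, h₂]; abel
  | single c cc =>
  induction D using Finsupp.induction_linear with
  | zero => simp
  | add D₁ D₂ h₁ h₂ => simp only [map_add, h₁, h₂]; abel
  | single d cd =>
  rw [← smul_single_one a, ← smul_single_one b, ← smul_single_one c, ← smul_single_one d]
  simp only [map_smul, LinearMap.smul_apply, ← smul_add, graft_single, star_single, mul_one,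
    one_smul, hstar_node_node]

theorem star_assoc_of_graft (o o' o'' : Bool) (A B C D E F : G →₀ k)
    (ih₁ : star k (star k (graft k o A B) (graft k o' C D)) E
      = star k (graft k o A B) (star k (graft k o' C D) E))
    (ih₂ : star k (star k B (graft k o' C D)) (graft k o'' E F)
      = star k B (star k (graft k o' C D) (graft k o'' E F))) :
    star k (star k (graft k o A B) (graft k o' C D)) (graft k o'' E F)
      = star k (graft k o A B) (star k (graft k o' C D) (graft k o'' E F)) := by
  have lhs : star k (star k (graft k o A B) (graft k o' C D)) (graft k o'' E F)
      = graft k o'' (star k (star k (graft k o A B) (graft k o' C D)) E) F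
        + graft k o' (star k (graft k o A B) C) (star k D (graft k o'' E F))
        + graft k o A (star k B (star k (graft k o' C D) (graft k o'' E F))) := by
    rw [star_graft_graft o o' A B C D, map_add, LinearMap.add_apply, star_graft_graft,
      star_graft_graft, ih₂]
    simp only [map_add, LinearMap.add_apply]
    abel
  have rhs : star k (graft k o A B) (star k (graft k o' C D) (graft k o'' E F))
      = graft k o'' (star k (graft k o A B) (star k (graft k o' C D) E)) F
        + graft k o' (star k (graft k o A B) C) (star k D (graft k o'' E F))
        + graft k o A (star k B (star k (graft k o' C D) (graft k o'' E F))) := by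
    rw [star_graft_graft o' o'' C D E F, map_add, star_graft_graft, star_graft_graft]
    simp only [map_add]
    abel
  rw [lhs, rhs, ih₁]

theorem star_assoc_single (t s r : G) :
    star k (star k (single t 1) (single s 1)) (single r 1)
      = star k (single t 1) (star k (single s 1) (single r (1 : k))) := by
  rcases t.eq_one_or_eq_node with rfl | ⟨o, a, b, rfl⟩
  · simp only [star_one_left]
  rcases s.eq_one_or_eq_node with rfl | ⟨o', c, d, rfl⟩
  · simp only [star_one_right, star_one_left]
  rcases r.eq_one_or_eq_node with rfl | ⟨o'', e, f, rfl⟩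
  · simp only [star_one_right]
  have ih₁ := star_assoc_single (node o a b) (node o' c d) e
  have ih₂ := star_assoc_single b (node o' c d) (node o'' e f)
  simp only [single_node] at ih₁ ih₂ ⊢
  exact star_assoc_of_graft o o' o'' _ _ _ _ _ _ ih₁ ih₂
termination_by t.order + s.order + r.order
decreasing_by
  all_goals
    subst_vars
    simp only [order_node]
    omega

theorem star_assoc (X Y Z : G →₀ k) : star k (star k X Y) Z = star k X (star k Y Z) := by
  induction X using Finsupp.induction_linear with
  | zero => simp
  | add X₁ X₂ h₁ h₂ => simp only [map_add, LinearMap.add_apply, h₁, h₂]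
  | single t a =>
  induction Y using Finsupp.induction_linear with
  | zero => simp
  | add Y₁ Y₂ h₁ h₂ => simp only [map_add, LinearMap.add_apply, h₁, h₂]
  | single s b =>
  induction Z using Finsupp.induction_linear with
  | zero => simp
  | add Z₁ Z₂ h₁ h₂ => simp only [map_add, h₁, h₂]
  | single r c =>
  rw [← smul_single_one t, ← smul_single_one s, ← smul_single_one r]
  simp only [map_smul, LinearMap.smul_apply, star_assoc_single]

theorem starT_one_left (X : G × G →₀ k) : starT k (single (one, one) 1) X = X := by
  induction X using Finsupp.induction_linear with
  | zero => simp
  | add X Y hX hY => simp only [map_add, hX, hY]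
  | single q c => simp

theorem starT_one_right (X : G × G →₀ k) : starT k X (single (one, one) 1) = X := by
  induction X using Finsupp.induction_linear with
  | zero => simp
  | add X Y hX hY => simp only [map_add, LinearMap.add_apply, hX, hY]
  | single q c => simp [star_one_right]

theorem graftT_starT_single_one_left (o : Bool) (t : G) (C D : G × G →₀ k) :
    graftT k o (starT k (single (t, one) 1) C) D
      = starT k (single (t, one) 1) (graftT k o C D) := by
  induction C using Finsupp.induction_linear with
  | zero => simp
  | add C₁ C₂ h₁ h₂ => simp only [map_add, LinearMap.add_apply, h₁, h₂]
  | single q c =>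
  induction D using Finsupp.induction_linear with
  | zero => simp
  | add D₁ D₂ h₁ h₂ => simp only [map_add, h₁, h₂]
  | single r d =>
  simp only [single_eq_tensor, tensorMap₂_tensor, star_assoc, star_one_left]

theorem graftT_starT_single_one_right (o : Bool) (t : G) (A B : G × G →₀ k) :
    graftT k o A (starT k B (single (t, one) 1))
      = starT k (graftT k o A B) (single (t, one) 1) := by
  induction A using Finsupp.induction_linear with
  | zero => simp
  | add A₁ A₂ h₁ h₂ => simp only [map_add, LinearMap.add_apply, h₁, h₂]
  | single p a =>
  induction B using Finsupp.induction_linear with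
  | zero => simp
  | add B₁ B₂ h₁ h₂ => simp only [map_add, LinearMap.add_apply, h₁, h₂]
  | single q b =>
  simp only [single_eq_tensor, tensorMap₂_tensor, star_assoc, star_one_right]

theorem starT_graftT_graftT (o o' : Bool) (A B C D : G × G →₀ k) :
    starT k (graftT k o A B) (graftT k o' C D)
      = graftT k o' (starT k (graftT k o A B) C) D
        + graftT k o A (starT k B (graftT k o' C D)) := by
  induction A using Finsupp.induction_linear with
  | zero => simp
  | add A₁ A₂ h₁ h₂ => simp only [map_add, LinearMap.add_apply, h₁, h₂]; abel
  | single p a =>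
  induction B using Finsupp.induction_linear with
  | zero => simp
  | add B₁ B₂ h₁ h₂ => simp only [map_add, LinearMap.add_apply, h₁, h₂]; abel
  | single q b =>
  induction C using Finsupp.induction_linear with
  | zero => simp
  | add C₁ C₂ h₁ h₂ => simp only [map_add, LinearMap.add_apply, h₁, h₂]; abel
  | single γ c =>
  induction D using Finsupp.induction_linear with
  | zero => simp
  | add D₁ D₂ h₁ h₂ => simp only [map_add, h₁, h₂]; abel
  | single δ d =>
  simp only [single_eq_tensor, tensorMap₂_tensor, star_assoc]
  rw [star_graft_graft, map_add]

theorem cop_node (o : Bool) (a b : G) :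
    cop k (node o a b) = graftT k o (cop k a) (cop k b) + single (node o a b, one) 1 := by
  cases o <;>
  · rw [tensorMap₂_apply, node, cop]
    refine congrArg (· + _) (sum_congr fun p _ => sum_congr fun q _ => ?_)
    simp [tensor_single_one_right, node]

theorem copL_graft (o : Bool) (X Y : G →₀ k) :
    copL k (graft k o X Y)
      = graftT k o (copL k X) (copL k Y) + tensor k G G (graft k o X Y) (single one 1) := by
  induction X using Finsupp.induction_linear with
  | zero => simp
  | add X₁ X₂ h₁ h₂ => simp only [map_add, LinearMap.add_apply, h₁, h₂]; abel
  | single a c =>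
  induction Y using Finsupp.induction_linear with
  | zero => simp
  | add Y₁ Y₂ h₁ h₂ => simp only [map_add, LinearMap.add_apply, h₁, h₂]; abel
  | single b d =>
  rw [← smul_single_one a, ← smul_single_one b]
  simp only [map_smul, LinearMap.smul_apply, ← smul_add, graft_single, copL_single, mul_one,
    one_smul, cop_node, tensor_single]

theorem starT_single_one_single_one (t s : G) :
    starT k (single (t, one) 1) (single (s, one) 1)
      = tensor k G G (hstar k t s) (single one 1) := by
  simp

theorem copL_hstar (t s : G) : copL k (hstar k t s) = starT k (cop k t) (cop k s) := by
  rcases t.eq_one_or_eq_node with rfl | ⟨o, a, b, rfl⟩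
  · simp [starT_one_left]
  rcases s.eq_one_or_eq_node with rfl | ⟨o', c, d, rfl⟩
  · simp [starT_one_right]
  have ih₁ := copL_hstar (node o a b) c
  have ih₂ := copL_hstar b (node o' c d)
  rw [hstar_node_node, map_add, copL_graft, copL_graft, ih₁, ih₂]
  simp only [copL_single, one_smul, cop_node o a b, cop_node o' c d, map_add,
    LinearMap.add_apply]
  rw [starT_graftT_graftT, graftT_starT_single_one_left, graftT_starT_single_one_right,
    starT_single_one_single_one, hstar_node_node]
  simp only [map_add, LinearMap.add_apply]
  abel
termination_by t.order + s.order
decreasing_by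
  all_goals
    subst_vars
    simp only [order_node]
    omega

end G

theorem tensorMul_eq_tensor {k : Type*} [CommRing k] (x y : G →₀ k) :
    tensorMul k x y = tensor k G G x y := by
  rw [tensorMul, tensor, linearCombination_linearCombination_apply]
  simp only [smul_single_one]

theorem prodT_eq_starT {k : Type*} [CommRing k] (x y : G × G →₀ k) :
    prodT k x y = G.starT k x y := by
  rw [prodT, tensorMap₂_apply]
  refine sum_congr fun p _ => sum_congr fun q _ => ?_
  simp [tensorMul_eq_tensor]

theorem stmt14_general (k : Type*) [CommRing k] (t s : G) :
    ((G.hstar k t s).sum fun u a => a • G.cop k u) = prodT k (G.cop k t) (G.cop k s) := by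
  rw [prodT_eq_starT, ← G.copL_hstar, G.copL, linearCombination_apply]

/-- The coproduct `Δ_h` on `k[Y^∞]_h` is an algebra homomorphism:
`Δ_h(t ∗_h s) = Δ_h(t) ∗_h Δ_h(s)`, the product on the tensor square being
componentwise. -/
theorem stmt14 (k : Type*) [CommRing k] [CharZero k] (t s : G) :
    ((G.hstar k t s).sum fun u a => a • G.cop k u) = prodT k (G.cop k t) (G.cop k s) :=
  stmt14_general k t s
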